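/- Let p ∈ [0,1], let (Z_i)_{i∈ℕ} be an i.i.d. sequence of Bernoulli(p) random variables on a probability space Ω, let μ̂_n = (1/n)∑_{i=1}^n Z_i, let d ∈ ℝ, and let Δ > 0. Define the stopping time J = inf{n ∈ ℕ, n ≥ 1 : |μ̂_n − d| ≥ ε(Δ, n)} (with J = ∞ if no such n exists). Then the probability that J < ∞ and the decision is incorrect—i.e., that J < ∞ and either (μ̂_J − d ≥ ε(Δ, J) and p < d) or (μ̂_J − d ≤ −ε(Δ, J) and p ≥ d)—is at most Δ. -/

import Mathlib

open MeasureTheory ProbabilityTheory Classical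

/-- The adaptive confidence radius
`ε(δ,n) = sqrt(((3/5)·log(log_{11/10}(n) + 1) + (5/9)·log(24/δ))/n)`. -/
noncomputable def eps (δ : ℝ) (n : ℕ) : ℝ :=
  Real.sqrt (((3 / 5) * Real.log (Real.log n / Real.log (11 / 10) + 1)
      + (5 / 9) * Real.log (24 / δ)) / n)

/-- The empirical mean `μ̂_n = (1/n) ∑_{i=1}^n Z_i`. -/
noncomputable def muhat {Ω : Type*} (Z : ℕ → Ω → ℝ) (n : ℕ) (ω : Ω) : ℝ :=
  (1 / n : ℝ) * ∑ i ∈ Finset.Icc 1 n, Z i ω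

/-- The stopping time `J = inf {n ≥ 1 : |μ̂_n − d| ≥ ε(Δ, n)}` of the verification
algorithm for the atomic specification `μ_Z ≥ d` (with `J = ∞` if no such `n` exists). -/
noncomputable def stopJ {Ω : Type*} (Z : ℕ → Ω → ℝ) (d Δ : ℝ) (ω : Ω) : ℕ∞ :=
  if ∃ n : ℕ, 1 ≤ n ∧ eps Δ n ≤ |muhat Z n ω - d|
  then ((sInf {n : ℕ | 1 ≤ n ∧ eps Δ n ≤ |muhat Z n ω - d|} : ℕ) : ℕ∞)
  else ⊤

/-!
An incorrect report at time `n` forces `|μ̂_n - p| ≥ ε(Δ, n)`, so it suffices to bound the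
probability that one of the centred partial sums `S_n = ±∑_{i ≤ n} (Z_i - p)` ever reaches
`n ε(Δ, n)`. Peel time into the geometric epochs `(11/10)^k ≤ n ≤ (11/10)^(k+1)`: on epoch `k`
the level `n ε(Δ, n)` is at least `√((11/10)^k c_k)` with
`c_k = (3/5) log (k + 1) + (5/9) log (24/Δ)`, and Doob's maximal inequality for the
submartingale `exp (t S_n)`, combined with Hoeffding's lemma, bounds the probability of crossing
it before time `(11/10)^(k+1)` by `exp (-(20/11) c_k) ≤ (Δ/24) (k + 1)^(-12/11)`. Since
`∑ (k + 1)^(-12/11) ≤ 12` by the integral test, the two directions together contribute at most `Δ`.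
-/

open Real Finset
open scoped NNReal ENNReal

section

variable {Ω : Type*} {mΩ : MeasurableSpace Ω} {μ : Measure Ω}

theorem MeasureTheory.Submartingale.measure_exists_ge_le [IsFiniteMeasure μ]
    {𝒢 : Filtration ℕ mΩ} {f : ℕ → Ω → ℝ} (hsub : Submartingale f 𝒢 μ) (hnonneg : 0 ≤ f)
    {ε : ℝ} (hε : 0 < ε) (N : ℕ) :
    μ {ω | ∃ k ≤ N, ε ≤ f k ω} ≤ ENNReal.ofReal (μ[f N] / ε) := by
  have hset : {ω | ∃ k ≤ N, ε ≤ f k ω} = {ω | ((ε.toNNReal : ℝ)) ≤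
      (range (N + 1)).sup' nonempty_range_add_one fun k => f k ω} := by
    ext ω
    simp [le_sup'_iff, hε.le]
  have hdoob := (maximal_ineq hsub hnonneg (ε := ε.toNNReal) N).trans
    (ENNReal.ofReal_le_ofReal (setIntegral_le_integral (hsub.integrable N)
      (Filter.Eventually.of_forall (hnonneg N))))
  rw [hset, ENNReal.ofReal_div_of_pos hε]
  rw [mul_comm] at hdoob
  exact (ENNReal.le_div_iff_mul_le (Or.inl (by simpa using hε))
    (Or.inl ENNReal.ofReal_ne_top)).2 hdoob

variable [IsProbabilityMeasure μ] {c : ℝ≥0}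

namespace ProbabilityTheory

/-- `t = 0` minimises `exp (c t² / 2) - mgf Y μ t`, so both terms have the same derivative
there. -/
theorem HasSubgaussianMGF.integral_eq_zero {Y : Ω → ℝ} (h : HasSubgaussianMGF Y c μ) :
    μ[Y] = 0 := by
  have hmin : IsLocalMin (fun t => exp (c * t ^ 2 / 2) - mgf Y μ t) 0 :=
    Filter.Eventually.of_forall fun t => by simpa [mgf_zero] using h.mgf_le t
  have hbound : HasDerivAt (fun t : ℝ => exp (c * t ^ 2 / 2)) 0 0 := by
    simpa using (((hasDerivAt_pow 2 (0 : ℝ)).const_mul (c : ℝ)).div_const 2).exp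
  have hmgf := hasDerivAt_mgf (X := Y) (μ := μ) (t := 0)
    (by simp [h.integrableExpSet_eq_univ])
  simpa using hmin.hasDerivAt_eq_zero (hbound.sub hmgf)

theorem HasSubgaussianMGF.one_le_integral_exp_mul {Y : Ω → ℝ} (h : HasSubgaussianMGF Y c μ)
    (t : ℝ) : 1 ≤ μ[fun ω => exp (t * Y ω)] := by
  have hlin : ∫ ω, (t * Y ω + 1) ∂μ = 1 := by
    rw [integral_add (h.integrable.const_mul t) (integrable_const 1), integral_const_mul,
      h.integral_eq_zero]
    simp
  rw [← hlin]
  exact integral_mono (h.integrable.const_mul t |>.add (integrable_const 1))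
    (h.integrable_exp_mul t) fun ω => add_one_le_exp _

variable {X : ℕ → Ω → ℝ}

theorem submartingale_exp_mul_sum_Icc (hmeas : ∀ i, Measurable (X i)) (hindep : iIndepFun X μ)
    (hX : ∀ i, HasSubgaussianMGF (X i) c μ) (t : ℝ) :
    Submartingale (fun n ω => exp (t * ∑ i ∈ Icc 1 n, X i ω))
      (Filtration.natural X fun i => (hmeas i).stronglyMeasurable) μ := by
  set ℱ := Filtration.natural X fun i => (hmeas i).stronglyMeasurable
  set g : ℕ → Ω → ℝ := fun n ω => exp (t * ∑ i ∈ Icc 1 n, X i ω)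
  have hint : ∀ n, Integrable (g n) μ := fun n =>
    (HasSubgaussianMGF.sum_of_iIndepFun hindep fun i _ => hX i).integrable_exp_mul t
  have hadapted : StronglyAdapted ℱ g := fun n =>
    continuous_exp.comp_stronglyMeasurable <| (Finset.stronglyMeasurable_fun_sum _ fun i hi =>
      (Filtration.stronglyAdapted_natural _ i).mono (ℱ.mono (mem_Icc.1 hi).2)).const_mul t
  refine submartingale_nat hadapted hint fun n => ?_
  set h : Ω → ℝ := fun ω => exp (t * X (n + 1) ω)
  have hsplit : g (n + 1) = g n * h := by
    funext ω
    simp [g, h, sum_Icc_succ_top, mul_add, exp_add]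
  have hpull : μ[g (n + 1) | ℱ n] =ᵐ[μ] g n * μ[h | ℱ n] := by
    rw [hsplit]
    exact condExp_mul_of_stronglyMeasurable_left (hadapted n) (hsplit ▸ hint (n + 1))
      ((hX _).integrable_exp_mul t)
  have hindep_next : μ[h | ℱ n] =ᵐ[μ] fun _ => μ[h] :=
    condExp_indep_eq (hmeas (n + 1)).comap_le (ℱ.le n)
      (continuous_exp.comp_stronglyMeasurable
        ((comap_measurable (X (n + 1))).stronglyMeasurable.const_mul t))
      (hindep.indep_comap_natural_of_lt _ n.lt_succ_self)
  filter_upwards [hpull, hindep_next] with ω hω hω'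
  rw [hω, Pi.mul_apply, hω']
  exact le_mul_of_one_le_right (exp_pos _).le ((hX (n + 1)).one_le_integral_exp_mul t)

theorem measure_exists_sum_Icc_ge_le (hmeas : ∀ i, Measurable (X i)) (hindep : iIndepFun X μ)
    (hX : ∀ i, HasSubgaussianMGF (X i) c μ) {a : ℝ} (ha : 0 ≤ a) (N : ℕ) :
    μ {ω | ∃ m ≤ N, a ≤ ∑ i ∈ Icc 1 m, X i ω} ≤
      ENNReal.ofReal (exp (-a ^ 2 / (2 * N * c))) := by
  rcases (by positivity : 0 ≤ (N : ℝ) * c).eq_or_lt with hNc | hNc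
  · rw [mul_assoc, ← hNc]
    simpa using prob_le_one
  -- the Chernoff parameter minimising `N c t² / 2 - t a`
  set t := a / (N * c)
  have ht : 0 ≤ t := by positivity
  have hmgf : μ[fun ω => exp (t * ∑ i ∈ Icc 1 N, X i ω)] ≤ exp (N * c * t ^ 2 / 2) := by
    simpa [mgf] using (HasSubgaussianMGF.sum_of_iIndepFun hindep (s := Icc 1 N)
      fun i _ => hX i).mgf_le t
  calc μ {ω | ∃ m ≤ N, a ≤ ∑ i ∈ Icc 1 m, X i ω}
      ≤ μ {ω | ∃ m ≤ N, exp (t * a) ≤ exp (t * ∑ i ∈ Icc 1 m, X i ω)} :=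
        measure_mono fun ω ⟨m, hm, hma⟩ =>
          ⟨m, hm, exp_le_exp.2 (mul_le_mul_of_nonneg_left hma ht)⟩
    _ ≤ ENNReal.ofReal (μ[fun ω => exp (t * ∑ i ∈ Icc 1 N, X i ω)] / exp (t * a)) :=
        (submartingale_exp_mul_sum_Icc hmeas hindep hX t).measure_exists_ge_le
          (fun _ _ => (exp_pos _).le) (exp_pos _) N
    _ ≤ ENNReal.ofReal (exp (N * c * t ^ 2 / 2) / exp (t * a)) :=
        ENNReal.ofReal_le_ofReal (div_le_div_of_nonneg_right hmgf (exp_pos _).le)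
    _ = ENNReal.ofReal (exp (-a ^ 2 / (2 * N * c))) := by
        rw [← exp_sub]
        congr 2
        simp only [t]
        field_simp
        ring

theorem hasSubgaussianMGF_sub_of_eq_zero_or_eq_one {Y : Ω → ℝ} (hY : Measurable Y)
    (hval : ∀ ω, Y ω = 0 ∨ Y ω = 1) {p : ℝ} (hp : 0 ≤ p)
    (hone : μ {ω | Y ω = 1} = ENNReal.ofReal p) :
    HasSubgaussianMGF (fun ω => Y ω - p) (1 / 4) μ := by
  have hind : Y = {ω | Y ω = 1}.indicator 1 := by
    funext ω
    rcases hval ω with h | h <;> simp [h]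
  have hset : MeasurableSet {ω | Y ω = 1} := hY (measurableSet_singleton 1)
  have hmean : μ[Y] = p := by
    rw [hind, integral_indicator_one hset, measureReal_def, hone,
      ENNReal.toReal_ofReal hp]
  have hIcc : ∀ᵐ ω ∂μ, Y ω ∈ Set.Icc (0 : ℝ) 1 :=
    ae_of_all _ fun ω => by rcases hval ω with h | h <;> simp [h]
  have := hasSubgaussianMGF_of_mem_Icc hY.aemeasurable hIcc
  rw [hmean] at this
  convert this using 1
  norm_num

end ProbabilityTheory

end

theorem summable_nat_add_one_rpow_neg {s : ℝ} (hs : 1 < s) :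
    Summable fun k : ℕ => ((k : ℝ) + 1) ^ (-s) := by
  simpa using (summable_nat_add_iff 1).2 (Real.summable_nat_rpow.2 (by linarith : -s < -1))

theorem tsum_nat_add_one_rpow_neg_le {s : ℝ} (hs : 1 < s) :
    ∑' k : ℕ, ((k : ℝ) + 1) ^ (-s) ≤ s / (s - 1) := by
  have htail :
      ∑' k : ℕ, ((k + 1 : ℕ) + 1 : ℝ) ^ (-s) ≤ ∫ x in Set.Ioi (1 : ℝ), x ^ (-s) := by
    have := AntitoneOn.tsum_comp_add_le_integral (f := fun x : ℝ => x ^ (-s)) 1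
      (fun x hx y _ hxy => rpow_le_rpow_of_nonpos (zero_lt_one.trans_le (by simpa using hx)) hxy
        (by linarith))
      (by simpa using integrableOn_Ioi_rpow_of_lt (by linarith : -s < -1) zero_lt_one)
      (fun x hx => by simp at hx; positivity)
    simpa [add_assoc, one_add_one_eq_two] using this
  rw [(summable_nat_add_one_rpow_neg hs).tsum_eq_zero_add]
  rw [integral_Ioi_rpow_of_lt (by linarith) zero_lt_one] at htail
  have : s / (s - 1) = 1 + -1 ^ (-s + 1) / (-s + 1) := by
    have h₁ : s - 1 ≠ 0 := by linarith
    have h₂ : -s + 1 ≠ 0 := by linarith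
    rw [one_rpow]
    field_simp
    ring
  rw [this]
  simpa using htail

/-- The numerator `n ε(δ, n)²` of the confidence radius, with `log_{11/10} n` replaced by the
index `k` of the epoch `(11/10)^k ≤ n ≤ (11/10)^(k+1)` containing `n`. -/
noncomputable def gridLevel (δ : ℝ) (k : ℕ) : ℝ :=
  (3 / 5) * log (k + 1) + (5 / 9) * log (24 / δ)

def gridExceedance {Ω : Type*} (X : ℕ → Ω → ℝ) (δ : ℝ) (k : ℕ) : Set Ω :=
  {ω | ∃ m ≤ ⌊(11 / 10 : ℝ) ^ (k + 1)⌋₊,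
    √((11 / 10) ^ k * gridLevel δ k) ≤ ∑ i ∈ Icc 1 m, X i ω}

section Grid

variable {δ : ℝ}

theorem gridLevel_nonneg (hδ : 0 < δ) (hδ24 : δ ≤ 24) (k : ℕ) : 0 ≤ gridLevel δ k := by
  have : 0 ≤ log (24 / δ) := log_nonneg (by rwa [le_div_iff₀ hδ, one_mul])
  have : 0 ≤ log ((k : ℝ) + 1) := log_nonneg (by simp)
  unfold gridLevel
  positivity

theorem sqrt_mul_gridLevel_le_mul_eps (hδ : 0 < δ) (hδ24 : δ ≤ 24) {n k : ℕ} (hn : 1 ≤ n)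
    (hk : (11 / 10 : ℝ) ^ k ≤ n) : √((11 / 10) ^ k * gridLevel δ k) ≤ n * eps δ n := by
  have hn₀ : (0 : ℝ) < n := by exact_mod_cast hn
  have hlogb : (k : ℝ) ≤ logb (11 / 10) n :=
    (le_logb_iff_rpow_le (by norm_num) hn₀).2 (by rwa [rpow_natCast])
  set L := (3 / 5) * log (log n / log (11 / 10) + 1) + (5 / 9) * log (24 / δ) with hL
  have hlevel : gridLevel δ k ≤ L := by
    have : log ((k : ℝ) + 1) ≤ log (log n / log (11 / 10) + 1) :=
      log_le_log (by positivity) (by rw [← logb]; linarith)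
    rw [gridLevel, hL]
    linarith
  have heps : n * eps δ n = √(n * L) := by
    rw [show (n : ℝ) * L = n ^ 2 * (L / n) by field_simp, sqrt_mul (sq_nonneg _),
      sqrt_sq hn₀.le]
    rfl
  rw [heps]
  exact sqrt_le_sqrt (mul_le_mul hk hlevel (gridLevel_nonneg hδ hδ24 k) hn₀.le)

theorem mem_iUnion_gridExceedance {Ω : Type*} {X : ℕ → Ω → ℝ} (hδ : 0 < δ) (hδ24 : δ ≤ 24)
    {n : ℕ} (hn : 1 ≤ n) {ω : Ω} (h : n * eps δ n ≤ ∑ i ∈ Icc 1 n, X i ω) :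
    ω ∈ ⋃ k, gridExceedance X δ k := by
  obtain ⟨k, hk, hnk⟩ := exists_nat_pow_near (x := (n : ℝ)) (by exact_mod_cast hn)
    (by norm_num : (1 : ℝ) < 11 / 10)
  exact Set.mem_iUnion.2 ⟨k, n, Nat.le_floor hnk.le,
    (sqrt_mul_gridLevel_le_mul_eps hδ hδ24 hn hk).trans h⟩

theorem exp_neg_mul_gridLevel_le (hδ : 0 < δ) (hδ24 : δ ≤ 24) (k : ℕ) :
    exp (-(20 / 11) * gridLevel δ k) ≤ δ / 24 * ((k : ℝ) + 1) ^ (-(12 / 11) : ℝ) := by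
  have hL : 0 ≤ log (24 / δ) := log_nonneg (by rwa [le_div_iff₀ hδ, one_mul])
  have hsplit : -(20 / 11) * gridLevel δ k
      = -(100 / 99) * log (24 / δ) + log ((k : ℝ) + 1) * (-(12 / 11)) := by
    unfold gridLevel
    ring
  rw [hsplit, exp_add, ← rpow_def_of_pos (by positivity)]
  gcongr
  calc exp (-(100 / 99) * log (24 / δ)) ≤ exp (-log (24 / δ)) := exp_le_exp.2 (by linarith)
    _ = δ / 24 := by rw [exp_neg, exp_log (by positivity), inv_div]

end Grid

theorem measure_gridExceedance_le {Ω : Type*} [MeasurableSpace Ω] {μ : Measure Ω}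
    [IsProbabilityMeasure μ] {X : ℕ → Ω → ℝ} (hmeas : ∀ i, Measurable (X i))
    (hindep : iIndepFun X μ) (hX : ∀ i, HasSubgaussianMGF (X i) (1 / 4) μ) {δ : ℝ}
    (hδ : 0 < δ) (hδ24 : δ ≤ 24) (k : ℕ) :
    μ (gridExceedance X δ k) ≤
      ENNReal.ofReal (δ / 24 * ((k : ℝ) + 1) ^ (-(12 / 11) : ℝ)) := by
  set N := ⌊(11 / 10 : ℝ) ^ (k + 1)⌋₊
  have hN : (1 : ℝ) ≤ N := Nat.one_le_cast.2
    (Nat.le_floor (by simpa using one_le_pow₀ (by norm_num : (1 : ℝ) ≤ 11 / 10)))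
  have hNle : (N : ℝ) ≤ 11 / 10 * (11 / 10) ^ k := by
    rw [← pow_succ']
    exact Nat.floor_le (by positivity)
  have hlevel := gridLevel_nonneg hδ hδ24 k
  refine (measure_exists_sum_Icc_ge_le hmeas hindep hX (sqrt_nonneg _) N).trans
    (ENNReal.ofReal_le_ofReal ((exp_le_exp.2 ?_).trans (exp_neg_mul_gridLevel_le hδ hδ24 k)))
  rw [sq_sqrt (by positivity), show ((1 / 4 : ℝ≥0) : ℝ) = 1 / 4 by norm_num, neg_div, neg_mul,
    neg_le_neg_iff, le_div_iff₀ (by positivity)]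
  nlinarith [mul_le_mul_of_nonneg_left hNle hlevel]

theorem natCast_mul_muhat_sub {Ω : Type*} (Z : ℕ → Ω → ℝ) (n : ℕ) (ω : Ω) (p : ℝ) :
    n * (muhat Z n ω - p) = ∑ i ∈ Icc 1 n, (Z i ω - p) := by
  rcases n.eq_zero_or_pos with rfl | hn
  · simp
  rw [muhat, sum_sub_distrib, sum_const, Nat.card_Icc, Nat.add_sub_cancel, nsmul_eq_mul]
  field_simp

theorem one_le_of_stopJ_eq {Ω : Type*} {Z : ℕ → Ω → ℝ} {d Δ : ℝ} {ω : Ω} {n : ℕ}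
    (h : stopJ Z d Δ ω = n) : 1 ≤ n := by
  unfold stopJ at h
  split_ifs at h with hstop
  · exact (Nat.cast_injective h ▸ Nat.sInf_mem hstop).1
  · simp at h

theorem incorrect_report_subset {Ω : Type*} {Z : ℕ → Ω → ℝ} {p d Δ : ℝ} (hΔ : 0 < Δ)
    (hΔ24 : Δ ≤ 24) :
    {ω | ∃ n : ℕ, stopJ Z d Δ ω = (n : ℕ∞) ∧
        ((muhat Z n ω - d ≥ eps Δ n ∧ p < d) ∨ (muhat Z n ω - d ≤ -eps Δ n ∧ p ≥ d))} ⊆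
      ⋃ k, gridExceedance (fun i ω => Z i ω - p) Δ k ∪
        gridExceedance (fun i ω => p - Z i ω) Δ k := by
  rw [Set.iUnion_union_distrib]
  rintro ω ⟨n, hJ, ⟨hge, hpd⟩ | ⟨hle, hpd⟩⟩ <;> have hn := one_le_of_stopJ_eq hJ
  · refine Or.inl (mem_iUnion_gridExceedance hΔ hΔ24 hn ?_)
    rw [← natCast_mul_muhat_sub]
    exact mul_le_mul_of_nonneg_left (by linarith) n.cast_nonneg
  · refine Or.inr (mem_iUnion_gridExceedance hΔ hΔ24 hn ?_)
    simp only [← neg_sub (Z _ ω) p, sum_neg_distrib, ← natCast_mul_muhat_sub]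
    nlinarith [(n.cast_nonneg : (0 : ℝ) ≤ n)]

/-- Probabilistic soundness and precision of the verification algorithm for the atomic
specification `p ≥ d`: the probability that the algorithm stops and reports an incorrect
answer is at most `Δ`. -/
theorem verify_sound_precise
    {Ω : Type*} [MeasurableSpace Ω] (μ : Measure Ω) [IsProbabilityMeasure μ]
    (p : ℝ) (hp : p ∈ Set.Icc (0 : ℝ) 1)
    (Z : ℕ → Ω → ℝ)
    (hmeas : ∀ i, Measurable (Z i))
    (hindep : iIndepFun Z μ)
    (hval : ∀ i ω, Z i ω = 0 ∨ Z i ω = 1)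
    (hbern : ∀ i, μ {ω | Z i ω = 1} = ENNReal.ofReal p)
    (d : ℝ) (Δ : ℝ) (hΔ : 0 < Δ) :
    μ {ω | ∃ n : ℕ, stopJ Z d Δ ω = (n : ℕ∞) ∧
        ((muhat Z n ω - d ≥ eps Δ n ∧ p < d) ∨
         (muhat Z n ω - d ≤ -eps Δ n ∧ p ≥ d))}
      ≤ ENNReal.ofReal Δ := by
  rcases lt_or_ge 24 Δ with hΔ24 | hΔ24
  · exact prob_le_one.trans (ENNReal.one_le_ofReal.2 (by linarith))
  have hcentred : ∀ i, HasSubgaussianMGF (fun ω => Z i ω - p) (1 / 4) μ := fun i =>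
    hasSubgaussianMGF_sub_of_eq_zero_or_eq_one (hmeas i) (hval i) hp.1 (hbern i)
  have hupper := measure_gridExceedance_le (fun i => (hmeas i).sub_const p)
    (hindep.comp _ fun _ => measurable_id.sub_const p) hcentred hΔ hΔ24
  have hlower := measure_gridExceedance_le (fun i => (hmeas i).const_sub p)
    (hindep.comp _ fun _ => measurable_id.const_sub p)
    (fun i => ((hcentred i).neg).congr (ae_of_all _ fun ω => by simp)) hΔ hΔ24
  calc _ ≤ μ (⋃ k, gridExceedance (fun i ω => Z i ω - p) Δ k ∪
        gridExceedance (fun i ω => p - Z i ω) Δ k) :=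
        measure_mono (incorrect_report_subset hΔ hΔ24)
    _ ≤ ∑' k : ℕ, ENNReal.ofReal (Δ / 12 * ((k : ℝ) + 1) ^ (-(12 / 11) : ℝ)) := by
        refine (measure_iUnion_le _).trans (ENNReal.tsum_le_tsum fun k =>
          (measure_union_le _ _).trans ((add_le_add (hupper k) (hlower k)).trans_eq ?_))
        rw [← ENNReal.ofReal_add (by positivity) (by positivity)]
        congr 1
        ring
    _ = ENNReal.ofReal (Δ / 12 * ∑' k : ℕ, ((k : ℝ) + 1) ^ (-(12 / 11) : ℝ)) := by
        rw [← tsum_mul_left, ENNReal.ofReal_tsum_of_nonneg (fun k => by positivity)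
          ((summable_nat_add_one_rpow_neg (by norm_num)).mul_left _)]
    _ ≤ ENNReal.ofReal Δ := by
        refine ENNReal.ofReal_le_ofReal ?_
        have := tsum_nat_add_one_rpow_neg_le (s := 12 / 11) (by norm_num)
        norm_num at this
        linarith [mul_le_mul_of_nonneg_left this (by positivity : 0 ≤ Δ / 12)]
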